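/- arXiv:1106.1940 — 3 statements merged into one kernel-verified Lean document; each statement's English description precedes it below -/
import Mathlib

section
/- If a sequence (a_t) of nonnegative reals satisfies a_{t+1} = a_t + 1 - 3*a_t/(2t+1) for all t ≥ 1 with a_1 = 4, then |a_t - (2/5)*t| ≤ 3.6 for all t ≥ 1. -/
/-! The deviation `e t = a t - 2t/5` satisfies
`e (t+1) = (2t-2)/(2t+1) * e t + (3/5)/(2t+1)`. The contraction factor removes `3/(2t+1) * C`
from a bound `|e t| ≤ C`, which absorbs the forcing term as soon as `C ≥ 1/5`; so such a bound
propagates from `t = 1`, where `e 1 = 3.6`. -/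

lemma abs_mul_add_le {x q r C : ℝ} (hx : |x| ≤ C) (hq : 0 ≤ q) (hr : |r| ≤ (1 - q) * C) :
    |x * q + r| ≤ C :=
  calc |x * q + r| ≤ |x| * q + |r| := by
        simpa only [abs_mul, abs_of_nonneg hq] using abs_add_le (x * q) r
    _ ≤ C * q + (1 - q) * C := by gcongr
    _ = C := by ring

lemma sub_linear_step_eq {a t : ℝ} (ht : 2 * t + 1 ≠ 0) :
    a + 1 - 3 * a / (2 * t + 1) - 2 / 5 * (t + 1)
      = (a - 2 / 5 * t) * ((2 * t - 2) / (2 * t + 1)) + 3 / 5 / (2 * t + 1) := by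
  field_simp
  ring

theorem abs_sub_linear_le_of_recurrence (a : ℕ → ℝ) {C : ℝ} (hC : 1 / 5 ≤ C)
    (hrec : ∀ t, 1 ≤ t → a (t + 1) = a t + 1 - 3 * a t / (2 * t + 1))
    (h1 : |a 1 - 2 / 5| ≤ C) :
    ∀ t, 1 ≤ t → |a t - 2 / 5 * t| ≤ C := by
  intro t ht
  induction t, ht using Nat.le_induction with
  | base => simpa using h1
  | succ n hn ih =>
    have hn1 : (1 : ℝ) ≤ n := by exact_mod_cast hn
    have hpos : (0 : ℝ) < 2 * n + 1 := by positivity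
    rw [hrec n hn, Nat.cast_succ, sub_linear_step_eq hpos.ne']
    refine abs_mul_add_le ih (div_nonneg (by linarith) hpos.le) ?_
    have hgap : (1 - (2 * n - 2) / (2 * n + 1)) * C = 3 * C / (2 * n + 1) := by
      field_simp
      ring
    rw [abs_of_pos (by positivity), hgap]
    exact div_le_div_of_nonneg_right (by linarith) hpos.le

theorem stmt_0_general (a : ℕ → ℝ)
    (hrec : ∀ t, 1 ≤ t → a (t + 1) = a t + 1 - 3 * a t / (2 * t + 1))
    (h1 : a 1 = 4) :
    ∀ t, 1 ≤ t → |a t - (2 / 5) * t| ≤ 3.6 :=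
  abs_sub_linear_le_of_recurrence a (by norm_num) hrec (by rw [h1]; norm_num)

theorem stmt_0 (a : ℕ → ℝ) (hnn : ∀ t, 0 ≤ a t)
    (hrec : ∀ t, 1 ≤ t → a (t + 1) = a t + 1 - 3 * a t / (2 * t + 1))
    (h1 : a 1 = 4) :
    ∀ t, 1 ≤ t → |a t - (2 / 5) * t| ≤ 3.6 :=
  stmt_0_general a hrec h1
end

section
/- If a sequence (a_t) of reals satisfies a_{t+1} = a_t + 1 - 3*a_t/(2t+1) for all t ≥ 1 with a_1 = 4, then a_t / t converges to 2/5 as t → ∞. -/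
/-! Since `3 / (2 * 1 + 1) = 1`, the first step of the recurrence gives `a 2 = 1`.
From there on `a t = (2 * t + 1) / 5` exactly, because this is a particular solution of the
recurrence, and the limit is read off the closed form. -/

open Filter Topology

section Recurrence

variable {a : ℕ → ℝ} (hrec : ∀ t, 1 ≤ t → a (t + 1) = a t + 1 - 3 * a t / (2 * t + 1))
include hrec

theorem apollonian_rec_two : a 2 = 1 := by
  rw [hrec 1 le_rfl]
  norm_num

theorem apollonian_rec_closed_form {t : ℕ} (ht : 2 ≤ t) : a t = (2 * t + 1) / 5 := by
  induction t, ht using Nat.le_induction with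
  | base => rw [apollonian_rec_two hrec]; norm_num
  | succ n hn ih =>
    have hpos : (2 * (n : ℝ) + 1) ≠ 0 := by positivity
    rw [hrec n (by omega), ih]
    field_simp
    push_cast
    ring

end Recurrence

theorem tendsto_two_mul_add_one_div_five_div_atTop :
    Tendsto (fun t : ℕ => (2 * t + 1) / 5 / (t : ℝ)) atTop (𝓝 (2 / 5)) := by
  have hlim : Tendsto (fun t : ℕ => 2 / 5 + 1 / 5 * (1 / (t : ℝ))) atTop (𝓝 (2 / 5 + 1 / 5 * 0)) :=
    (tendsto_one_div_atTop_nhds_zero_nat.const_mul _).const_add _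
  rw [mul_zero, add_zero] at hlim
  refine hlim.congr' ?_
  filter_upwards [eventually_ne_atTop 0] with t ht
  field_simp

theorem stmt_1_general (a : ℕ → ℝ)
    (hrec : ∀ t, 1 ≤ t → a (t + 1) = a t + 1 - 3 * a t / (2 * t + 1)) :
    Filter.Tendsto (fun t : ℕ => a t / t) Filter.atTop (nhds (2 / 5)) := by
  refine tendsto_two_mul_add_one_div_five_div_atTop.congr' ?_
  filter_upwards [eventually_ge_atTop 2] with t ht
  rw [apollonian_rec_closed_form hrec ht]

theorem stmt_1 (a : ℕ → ℝ)
    (hrec : ∀ t, 1 ≤ t → a (t + 1) = a t + 1 - 3 * a t / (2 * t + 1))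
    (h1 : a 1 = 4) :
    Filter.Tendsto (fun t : ℕ => a t / t) Filter.atTop (nhds (2 / 5)) :=
  stmt_1_general a hrec
end

section
/- Suppose a real sequence (a_t) satisfies a_{t+1} = (1 - b_t/(t + t_1)) * a_t + c_t for all t ≥ t_0, where t_1 ≥ 0 is a fixed real, b_t → b > 0, and c_t → c. Then lim_{t→∞} a_t / t exists and equals c/(1+b). -/
/-!
Put `y t = a t / t`. The recursion becomes the averaging recursion
`y (t + 1) = (1 - α t) * y t + α t * β t` with `γ t = 1 + t * b t / (t + t₁) → 1 + B`,
step sizes `α t = γ t / (t + 1)` and targets `β t = c t / γ t → C / (1 + B)`.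
Since `∑ α t` diverges like the harmonic series, the weight `∏ (1 - α s)` left on the initial
error tends to zero, and `y` is eventually within any neighbourhood of the limit of `β`.
-/

open Filter Finset Topology

lemma tendsto_sum_range_atTop_of_eventually_le {f g : ℕ → ℝ} (hfg : ∀ᶠ s in atTop, f s ≤ g s)
    (hf : Tendsto (fun n => ∑ s ∈ range n, f s) atTop atTop) :
    Tendsto (fun n => ∑ s ∈ range n, g s) atTop atTop := by
  obtain ⟨N, hN⟩ := eventually_atTop.1 hfg
  refine tendsto_atTop_mono' _ ?_
    (tendsto_atTop_add_const_right _ (∑ s ∈ range N, (g s - f s)) hf)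
  filter_upwards [eventually_ge_atTop N] with n hn
  have hIco : ∑ s ∈ Ico N n, f s ≤ ∑ s ∈ Ico N n, g s :=
    sum_le_sum fun s hs => hN s (mem_Ico.1 hs).1
  rw [sum_Ico_eq_sub _ hn, sum_Ico_eq_sub _ hn] at hIco
  simp only [sum_sub_distrib]
  linarith

section AveragingRecursion

variable {α β y : ℕ → ℝ} {L δ : ℝ} {N : ℕ}

lemma tendsto_prod_Ico_one_sub_nhds_zero (hα : ∀ s, N ≤ s → α s ≤ 1)
    (hdiv : Tendsto (fun n => ∑ s ∈ range n, α s) atTop atTop) :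
    Tendsto (fun n => ∏ s ∈ Ico N n, (1 - α s)) atTop (𝓝 0) := by
  have hsum : Tendsto (fun n => ∑ s ∈ range n, α s - ∑ s ∈ range N, α s) atTop atTop :=
    tendsto_atTop_add_const_right _ _ hdiv
  refine squeeze_zero' (Eventually.of_forall fun n => prod_nonneg fun s hs => ?_) ?_
    (Real.tendsto_exp_atBot.comp (tendsto_neg_atBot_iff.2 hsum))
  · linarith [hα s (mem_Ico.1 hs).1]
  filter_upwards [eventually_ge_atTop N] with n hn
  calc ∏ s ∈ Ico N n, (1 - α s) ≤ ∏ s ∈ Ico N n, Real.exp (-α s) :=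
        prod_le_prod (fun s hs => by linarith [hα s (mem_Ico.1 hs).1])
          fun s _ => Real.one_sub_le_exp_neg (α s)
    _ = Real.exp (-(∑ s ∈ range n, α s - ∑ s ∈ range N, α s)) := by
        rw [← Real.exp_sum, sum_neg_distrib, sum_Ico_eq_sub _ hn]

lemma dist_le_prod_Ico_one_sub_mul_add (hα : ∀ s, N ≤ s → 0 ≤ α s ∧ α s ≤ 1)
    (hrec : ∀ s, N ≤ s → y (s + 1) = (1 - α s) * y s + α s * β s)
    (hβ : ∀ s, N ≤ s → dist (β s) L ≤ δ) {n : ℕ} (hn : N ≤ n) :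
    dist (y n) L ≤ (∏ s ∈ Ico N n, (1 - α s)) * dist (y N) L + δ := by
  induction n, hn using Nat.le_induction with
  | base => simpa using dist_nonneg.trans (hβ N le_rfl)
  | succ n hn ih =>
    obtain ⟨hα₀, hα₁⟩ := hα n hn
    rw [prod_Ico_succ_top hn]
    simp only [Real.dist_eq] at ih hβ ⊢
    calc |y (n + 1) - L| = |(1 - α n) * (y n - L) + α n * (β n - L)| := by
          rw [hrec n hn]; ring_nf
      _ ≤ (1 - α n) * |y n - L| + α n * |β n - L| := by
          refine (abs_add_le _ _).trans_eq ?_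
          rw [abs_mul, abs_mul, abs_of_nonneg (sub_nonneg.2 hα₁), abs_of_nonneg hα₀]
      _ ≤ (1 - α n) * ((∏ s ∈ Ico N n, (1 - α s)) * |y N - L| + δ) + α n * δ := by
          gcongr
          exact hβ n hn
      _ = (∏ s ∈ Ico N n, (1 - α s)) * (1 - α n) * |y N - L| + δ := by ring

theorem tendsto_of_averaging_recursion (hα : ∀ᶠ s in atTop, 0 ≤ α s ∧ α s ≤ 1)
    (hrec : ∀ᶠ s in atTop, y (s + 1) = (1 - α s) * y s + α s * β s)
    (hβ : Tendsto β atTop (𝓝 L))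
    (hdiv : Tendsto (fun n => ∑ s ∈ range n, α s) atTop atTop) :
    Tendsto y atTop (𝓝 L) := by
  refine Metric.tendsto_nhds.2 fun ε hε => ?_
  obtain ⟨N, hN⟩ := eventually_atTop.1
    (hα.and (hrec.and (hβ.eventually (Metric.closedBall_mem_nhds L (half_pos hε)))))
  have hP := (tendsto_prod_Ico_one_sub_nhds_zero (fun s hs => (hN s hs).1.2) hdiv).mul_const
    (dist (y N) L)
  rw [zero_mul] at hP
  filter_upwards [eventually_ge_atTop N, hP.eventually (gt_mem_nhds (half_pos hε))]
    with n hn hPn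
  calc dist (y n) L ≤ (∏ s ∈ Ico N n, (1 - α s)) * dist (y N) L + ε / 2 :=
        dist_le_prod_Ico_one_sub_mul_add (fun s hs => (hN s hs).1) (fun s hs => (hN s hs).2.1)
          (fun s hs => (hN s hs).2.2) hn
    _ < ε := by linarith

end AveragingRecursion

lemma tendsto_one_add_natCast_mul_div_add {b : ℕ → ℝ} {B : ℝ} (hb : Tendsto b atTop (𝓝 B))
    (t₁ : ℝ) : Tendsto (fun t : ℕ => 1 + t * b t / (t + t₁)) atTop (𝓝 (1 + B)) := by
  have h := tendsto_const_nhds (x := (1 : ℝ)).add (hb.mul (tendsto_natCast_div_add_atTop t₁))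
  rw [mul_one] at h
  exact h.congr fun t => by ring

lemma div_add_one_eq_averaging_step {t t₁ x b c γ : ℝ} (ht : 0 < t) (ht₁ : 0 ≤ t₁) (hγ₀ : γ ≠ 0)
    (hγ : γ = 1 + t * b / (t + t₁)) :
    ((1 - b / (t + t₁)) * x + c) / (t + 1) =
      (1 - γ / (t + 1)) * (x / t) + γ / (t + 1) * (c / γ) := by
  have hcoef : 1 - b / (t + t₁) = (t + 1 - γ) / t := by
    have htt : t + t₁ ≠ 0 := by positivity
    rw [hγ]
    field_simp
    ring
  rw [hcoef]
  field_simp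

theorem stmt_2 (a b c : ℕ → ℝ) (t₀ : ℕ) (t₁ : ℝ) (ht₁ : 0 ≤ t₁)
    (B C : ℝ) (hB : 0 < B)
    (hb : Filter.Tendsto b Filter.atTop (nhds B))
    (hc : Filter.Tendsto c Filter.atTop (nhds C))
    (hrec : ∀ t, t₀ ≤ t → a (t + 1) = (1 - b t / (t + t₁)) * a t + c t) :
    Filter.Tendsto (fun t : ℕ => a t / t) Filter.atTop (nhds (C / (1 + B))) := by
  set γ : ℕ → ℝ := fun t => 1 + t * b t / (t + t₁)
  have hγ : Tendsto γ atTop (𝓝 (1 + B)) := tendsto_one_add_natCast_mul_div_add hb t₁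
  have hγ₁ : ∀ᶠ t in atTop, 1 ≤ γ t := hγ.eventually (eventually_ge_nhds (by linarith))
  have hα : Tendsto (fun t : ℕ => γ t / (t + 1)) atTop (𝓝 0) :=
    hγ.div_atTop (tendsto_atTop_add_const_right _ 1 tendsto_natCast_atTop_atTop)
  refine tendsto_of_averaging_recursion (α := fun t => γ t / (t + 1)) (β := fun t => c t / γ t)
    ?_ ?_ (hc.div hγ (by positivity)) ?_
  · filter_upwards [hγ₁, hα.eventually (eventually_le_nhds one_pos)] with t hγt hαt
    exact ⟨div_nonneg (by linarith) (by positivity), hαt⟩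
  · filter_upwards [hγ₁, eventually_ge_atTop (max t₀ 1)] with t hγt ht
    rw [hrec t (le_of_max_le_left ht), Nat.cast_succ]
    exact div_add_one_eq_averaging_step (by exact_mod_cast le_of_max_le_right ht) ht₁
      (by linarith) rfl
  · refine tendsto_sum_range_atTop_of_eventually_le ?_
      Real.tendsto_sum_range_one_div_nat_succ_atTop
    filter_upwards [hγ₁] with t hγt
    gcongr
end
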